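/- arXiv:2510.16860 — 2 statements merged into one kernel-verified Lean document; each statement's English description precedes it below -/
import Mathlib

section
/- Let H be a real inner product space, θ ∈ [0,1] and ε ∈ (−1,1). Then for all v₋, v₀, v₊ ∈ H, ⟨α₂ v₊ + α₁ v₀ + α₀ v₋ , β₂ v₊ + β₁ v₀ + β₀ v₋⟩ = ‖(v₊, v₀)‖²_{G(θ)} − ‖(v₀, v₋)‖²_{G(θ)} + ‖a₂ v₊ + a₁ v₀ + a₀ v₋‖², where a₁ = −√(θ(1−θ²))/(√2·(1+εθ)), a₂ = −((1−ε)/2)·a₁ and a₀ = −((1+ε)/2)·a₁. -/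
open scoped RealInnerProductSpace

noncomputable def dlnAlpha2 (θ : ℝ) : ℝ := (1 + θ) / 2
noncomputable def dlnAlpha1 (θ : ℝ) : ℝ := -θ
noncomputable def dlnAlpha0 (θ : ℝ) : ℝ := (θ - 1) / 2

noncomputable def dlnBeta2 (θ ε : ℝ) : ℝ :=
  (1 / 4) * (1 + (1 - θ ^ 2) / (1 + ε * θ) ^ 2
    + ε ^ 2 * (θ * (1 - θ ^ 2)) / (1 + ε * θ) ^ 2 + θ)
noncomputable def dlnBeta1 (θ ε : ℝ) : ℝ :=
  (1 / 2) * (1 - (1 - θ ^ 2) / (1 + ε * θ) ^ 2)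
noncomputable def dlnBeta0 (θ ε : ℝ) : ℝ :=
  (1 / 4) * (1 + (1 - θ ^ 2) / (1 + ε * θ) ^ 2
    - ε ^ 2 * (θ * (1 - θ ^ 2)) / (1 + ε * θ) ^ 2 - θ)

noncomputable def dlnA1 (θ ε : ℝ) : ℝ :=
  -(Real.sqrt (θ * (1 - θ ^ 2))) / (Real.sqrt 2 * (1 + ε * θ))
noncomputable def dlnA2 (θ ε : ℝ) : ℝ := -((1 - ε) / 2) * dlnA1 θ ε
noncomputable def dlnA0 (θ ε : ℝ) : ℝ := -((1 + ε) / 2) * dlnA1 θ ε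

/-- The square of the `G(θ)`-norm of the pair `(u, v)`. -/
noncomputable def gNormSq {H : Type*} [NormedAddCommGroup H] (θ : ℝ) (u v : H) : ℝ :=
  ((1 + θ) / 4) * ‖u‖ ^ 2 + ((1 - θ) / 4) * ‖v‖ ^ 2

/-! Both sides are quadratic forms in `(vp, v0, vm)`, so after expanding them in the Gram entries
`‖vp‖², ‖v0‖², ‖vm‖², ⟪vp, v0⟫, ⟪vp, vm⟫, ⟪v0, vm⟫` the identity says that the symmetric part of
`α βᵀ` equals `diag((1+θ)/4, -θ/2, -(1-θ)/4) + a aᵀ`. These six scalar identities hold because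
`a₁² = θ(1-θ²) / (2(1+εθ)²)` and `a₂, a₀` are the fixed multiples `-(1∓ε)/2` of `a₁`. -/

section ThreeTermCombination

variable {H : Type*} [NormedAddCommGroup H] [InnerProductSpace ℝ H]

theorem real_inner_three_combination (x y z : H) (c₂ c₁ c₀ b₂ b₁ b₀ : ℝ) :
    ⟪c₂ • x + c₁ • y + c₀ • z, b₂ • x + b₁ • y + b₀ • z⟫
      = c₂ * b₂ * ‖x‖ ^ 2 + c₁ * b₁ * ‖y‖ ^ 2 + c₀ * b₀ * ‖z‖ ^ 2
        + (c₂ * b₁ + c₁ * b₂) * ⟪x, y⟫ + (c₂ * b₀ + c₀ * b₂) * ⟪x, z⟫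
        + (c₁ * b₀ + c₀ * b₁) * ⟪y, z⟫ := by
  simp only [inner_add_left, inner_add_right, real_inner_smul_left, real_inner_smul_right,
    real_inner_self_eq_norm_sq, real_inner_comm x y, real_inner_comm x z, real_inner_comm y z]
  ring

theorem norm_three_combination_sq (x y z : H) (c₂ c₁ c₀ : ℝ) :
    ‖c₂ • x + c₁ • y + c₀ • z‖ ^ 2
      = c₂ ^ 2 * ‖x‖ ^ 2 + c₁ ^ 2 * ‖y‖ ^ 2 + c₀ ^ 2 * ‖z‖ ^ 2
        + 2 * c₂ * c₁ * ⟪x, y⟫ + 2 * c₂ * c₀ * ⟪x, z⟫ + 2 * c₁ * c₀ * ⟪y, z⟫ := by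
  rw [← real_inner_self_eq_norm_sq, real_inner_three_combination]
  ring

end ThreeTermCombination

theorem dlnA1_sq {θ : ℝ} (ε : ℝ) (hθ : 0 ≤ θ * (1 - θ ^ 2)) :
    dlnA1 θ ε ^ 2 = θ * (1 - θ ^ 2) / (2 * (1 + ε * θ) ^ 2) := by
  rw [dlnA1, div_pow, neg_sq, mul_pow, Real.sq_sqrt hθ, Real.sq_sqrt zero_le_two]

theorem dln_coefficient_identities {θ ε : ℝ} (hθ : 0 ≤ θ * (1 - θ ^ 2)) (hD : 1 + ε * θ ≠ 0) :
    dlnAlpha2 θ * dlnBeta2 θ ε = (1 + θ) / 4 + dlnA2 θ ε ^ 2 ∧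
    dlnAlpha1 θ * dlnBeta1 θ ε = (1 - θ) / 4 - (1 + θ) / 4 + dlnA1 θ ε ^ 2 ∧
    dlnAlpha0 θ * dlnBeta0 θ ε = -((1 - θ) / 4) + dlnA0 θ ε ^ 2 ∧
    dlnAlpha2 θ * dlnBeta1 θ ε + dlnAlpha1 θ * dlnBeta2 θ ε = 2 * dlnA2 θ ε * dlnA1 θ ε ∧
    dlnAlpha2 θ * dlnBeta0 θ ε + dlnAlpha0 θ * dlnBeta2 θ ε = 2 * dlnA2 θ ε * dlnA0 θ ε ∧
    dlnAlpha1 θ * dlnBeta0 θ ε + dlnAlpha0 θ * dlnBeta1 θ ε = 2 * dlnA1 θ ε * dlnA0 θ ε := by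
  have ha := dlnA1_sq ε hθ
  -- `field_simp` normalises the denominator to `1 + θ * ε` and looks for this form
  have hD' : 1 + θ * ε ≠ 0 := by rwa [mul_comm θ]
  simp only [dlnAlpha2, dlnAlpha1, dlnAlpha0, dlnBeta2, dlnBeta1, dlnBeta0, dlnA2, dlnA0]
  generalize dlnA1 θ ε = a at ha ⊢
  refine ⟨?_, ?_, ?_, ?_, ?_, ?_⟩
  · linear_combination (norm := (field_simp; ring)) (-((1 - ε) / 2) ^ 2) * ha
  · linear_combination (norm := (field_simp; ring)) (-1) * ha
  · linear_combination (norm := (field_simp; ring)) (-((1 + ε) / 2) ^ 2) * ha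
  · linear_combination (norm := (field_simp; ring)) (1 - ε) * ha
  · linear_combination (norm := (field_simp; ring)) (-(1 - ε) * (1 + ε) / 2) * ha
  · linear_combination (norm := (field_simp; ring)) (1 + ε) * ha

/-- G-stability identity of the variable-step DLN method in a real inner product space. -/
theorem dln_G_stability_identity {H : Type*} [NormedAddCommGroup H] [InnerProductSpace ℝ H]
    (θ ε : ℝ) (hθ : θ ∈ Set.Icc (0 : ℝ) 1) (hε : ε ∈ Set.Ioo (-1 : ℝ) 1)
    (vm v0 vp : H) :
    ⟪dlnAlpha2 θ • vp + dlnAlpha1 θ • v0 + dlnAlpha0 θ • vm,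
      dlnBeta2 θ ε • vp + dlnBeta1 θ ε • v0 + dlnBeta0 θ ε • vm⟫
      = gNormSq θ vp v0 - gNormSq θ v0 vm
        + ‖dlnA2 θ ε • vp + dlnA1 θ ε • v0 + dlnA0 θ ε • vm‖ ^ 2 := by
  obtain ⟨hθ0, hθ1⟩ := hθ
  have hS : 0 ≤ θ * (1 - θ ^ 2) := mul_nonneg hθ0 (by nlinarith)
  have hD : 1 + ε * θ ≠ 0 := by nlinarith [hε.1, hε.2]
  obtain ⟨hP, hQ, hR, hX, hY, hZ⟩ := dln_coefficient_identities hS hD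
  rw [real_inner_three_combination, norm_three_combination_sq, gNormSq, gNormSq]
  linear_combination ‖vp‖ ^ 2 * hP + ‖v0‖ ^ 2 * hQ + ‖vm‖ ^ 2 * hR
    + ⟪vp, v0⟫ * hX + ⟪vp, vm⟫ * hY + ⟪v0, vm⟫ * hZ
end

section
/- Let H and K be real inner product spaces, θ ∈ [0,1], κ ≥ 0, fix n ≥ 1 and ε ∈ (−1,1), and let α₀, α₁, α₂ and β₀, β₁, β₂ be the DLN coefficients with variability ε. Let u_{n−1}, u_n, u_{n+1} ∈ H, g_{n−1}, g_n, g_{n+1} ∈ K, and W_n, W_{n+1} ∈ ℝ. If ⟨α₂u_{n+1}+α₁u_n+α₀u_{n−1}, β₂u_{n+1}+β₁u_n+β₀u_{n−1}⟩ + κ·⟨α₂g_{n+1}+α₁g_n+α₀g_{n−1}, β₂g_{n+1}+β₁g_n+β₀g_{n−1}⟩ + κ·(W_{n+1} − W_n) ≤ 0, then the discrete energy E_n := ‖(u_{n+1}, u_n)‖²_{G(θ)} + κ·(‖(g_{n+1}, g_n)‖²_{G(θ)} + W_{n+1}) satisfies E_n ≤ E_{n−1}, where E_{n−1} := ‖(u_n,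 u_{n−1})‖²_{G(θ)} + κ·(‖(g_n, g_{n−1})‖²_{G(θ)} + W_n). (Abstract form of the discrete energy dissipation law for the DLN scheme.) -/
open scoped RealInnerProductSpace

/-!
The DLN method is G-stable: for `x, y, z` in a real inner product space,
`⟪α₂x + α₁y + α₀z, β₂x + β₁y + β₀z⟫` equals the increment `‖(x, y)‖²_G - ‖(y, z)‖²_G` of the
G-norm plus the numerical dissipation `θ(1 - θ²) / (8(1 + εθ)²) · ‖(1 - ε)x - 2y + (1 + ε)z‖²`,
which is nonnegative for `θ ∈ [0, 1]`. Applying this to `u` and to `g` and adding the hypothesis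
makes the energy nonincreasing.
-/

section

variable {H : Type*} [NormedAddCommGroup H] [InnerProductSpace ℝ H]

theorem real_inner_smul_add_smul_add_smul (a b c a' b' c' : ℝ) (x y z : H) :
    ⟪a • x + b • y + c • z, a' • x + b' • y + c' • z⟫
      = a * a' * ⟪x, x⟫ + b * b' * ⟪y, y⟫ + c * c' * ⟪z, z⟫ + (a * b' + b * a') * ⟪x, y⟫
        + (a * c' + c * a') * ⟪x, z⟫ + (b * c' + c * b') * ⟪y, z⟫ := by
  simp only [inner_add_left, inner_add_right, real_inner_smul_left, real_inner_smul_right,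
    real_inner_comm x y, real_inner_comm x z, real_inner_comm y z]
  ring

theorem gNormSq_eq_inner (θ : ℝ) (x y : H) :
    gNormSq θ x y = (1 + θ) / 4 * ⟪x, x⟫ + (1 - θ) / 4 * ⟪y, y⟫ := by
  simp only [gNormSq, real_inner_self_eq_norm_sq]

theorem inner_dln_eq_gNormSq_sub_add {θ ε : ℝ} (hεθ : 1 + ε * θ ≠ 0) (x y z : H) :
    ⟪dlnAlpha2 θ • x + dlnAlpha1 θ • y + dlnAlpha0 θ • z,
        dlnBeta2 θ ε • x + dlnBeta1 θ ε • y + dlnBeta0 θ ε • z⟫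
      = gNormSq θ x y - gNormSq θ y z
        + θ * (1 - θ ^ 2) / (8 * (1 + ε * θ) ^ 2)
          * ‖(1 - ε) • x + (-2 : ℝ) • y + (1 + ε) • z‖ ^ 2 := by
  rw [← real_inner_self_eq_norm_sq, real_inner_smul_add_smul_add_smul,
    real_inner_smul_add_smul_add_smul, gNormSq_eq_inner, gNormSq_eq_inner]
  simp only [dlnAlpha2, dlnAlpha1, dlnAlpha0, dlnBeta2, dlnBeta1, dlnBeta0]
  have hθε : 1 + θ * ε ≠ 0 := by rwa [mul_comm]
  field_simp
  ring

theorem gNormSq_sub_le_inner_dln {θ ε : ℝ} (hθ : θ ∈ Set.Icc (0 : ℝ) 1) (hεθ : 1 + ε * θ ≠ 0)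
    (x y z : H) :
    gNormSq θ x y - gNormSq θ y z
      ≤ ⟪dlnAlpha2 θ • x + dlnAlpha1 θ • y + dlnAlpha0 θ • z,
          dlnBeta2 θ ε • x + dlnBeta1 θ ε • y + dlnBeta0 θ ε • z⟫ := by
  obtain ⟨hθ0, hθ1⟩ := hθ
  have hθ_sq : 0 ≤ 1 - θ ^ 2 := by nlinarith
  rw [inner_dln_eq_gNormSq_sub_add hεθ]
  have : 0 ≤ θ * (1 - θ ^ 2) / (8 * (1 + ε * θ) ^ 2)
      * ‖(1 - ε) • x + (-2 : ℝ) • y + (1 + ε) • z‖ ^ 2 := by positivity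
  linarith

end

/-- Abstract form of the discrete energy dissipation law for the DLN scheme. -/
theorem dln_discrete_energy_dissipation_step
    {H K : Type*} [NormedAddCommGroup H] [InnerProductSpace ℝ H]
    [NormedAddCommGroup K] [InnerProductSpace ℝ K]
    (θ : ℝ) (hθ : θ ∈ Set.Icc (0 : ℝ) 1) (κ : ℝ) (hκ : 0 ≤ κ)
    (ε : ℝ) (hε : ε ∈ Set.Ioo (-1 : ℝ) 1)
    (um u0 up : H) (gm g0 gp : K) (W0 Wp : ℝ)
    (h : ⟪dlnAlpha2 θ • up + dlnAlpha1 θ • u0 + dlnAlpha0 θ • um,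
            dlnBeta2 θ ε • up + dlnBeta1 θ ε • u0 + dlnBeta0 θ ε • um⟫
          + κ * ⟪dlnAlpha2 θ • gp + dlnAlpha1 θ • g0 + dlnAlpha0 θ • gm,
            dlnBeta2 θ ε • gp + dlnBeta1 θ ε • g0 + dlnBeta0 θ ε • gm⟫
          + κ * (Wp - W0) ≤ 0) :
    gNormSq θ up u0 + κ * (gNormSq θ gp g0 + Wp)
      ≤ gNormSq θ u0 um + κ * (gNormSq θ g0 gm + W0) := by
  have hεθ : 1 + ε * θ ≠ 0 := by nlinarith [hθ.1, hθ.2, hε.1, hε.2]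
  have hu := gNormSq_sub_le_inner_dln hθ hεθ up u0 um
  have hg := mul_le_mul_of_nonneg_left (gNormSq_sub_le_inner_dln hθ hεθ gp g0 gm) hκ
  linarith
end
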